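/- arXiv:2605.09834 — 4 statements merged into one kernel-verified Lean document; each statement's English description precedes it below -/
import Mathlib

section
/- Let (Ω, F, ℙ) be a probability space, E a measurable space, P0 a probability measure on E, Θ ⊆ ℝ^d compact, and ℓ : Θ × E → ℝ measurable with P0 ℓ_θ finite for every θ ∈ Θ. Suppose θ0 ∈ Θ is a well-separated minimizer of θ ↦ P0 ℓ_θ, i.e. for every ε > 0, inf{P0 ℓ_θ − P0 ℓ_{θ0} : θ ∈ Θ, ‖θ − θ0‖ ≥ ε} > 0. Fix γ > 0. For each m, let Q_m be a random probability measure on E with Q_m(ω) ℓ_θ finite for all θ and ω, let D_m(ω) := sup_{θ∈Θ} |Q_m(ω) ℓ_θ − P0 ℓ_θ| be measurable, and let θ_m : Ω → Θ be measurable with θ_m(ω) a minimizer over Θ of θ ↦ P0 ℓ_θ + γ Q_m(ω) ℓ_θ for every ω. If D_m → 0 in probability as m → ∞, then θ_m converges in probability to θ0, i.e. for every ε > 0, ℙ(‖θ_m − θ0‖ > ε) → 0. -/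
open MeasureTheory Filter

/-- first half of Proposition 1: consistency of the rectified oracle
target.  `θm m` minimizes `θ ↦ P0 ℓ_θ + γ Q_m ℓ_θ` over the compact set `Θ`, where `θ0`
is a well-separated minimizer of `θ ↦ P0 ℓ_θ`.  If the (measurable) supremum
`D_m(ω) = sup_{θ∈Θ} |Q_m(ω) ℓ_θ − P0 ℓ_θ|` tends to `0` in probability, then
`θm → θ0` in probability.  (The supremum is encoded by a measurable dominating function
`D` with `|Q_m(ω) ℓ_θ − P0 ℓ_θ| ≤ D m ω` for all `θ ∈ Θ`, which is equivalent.) -/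
theorem statement1 {Ω : Type*} [MeasurableSpace Ω] (μ : Measure Ω) [IsProbabilityMeasure μ]
    {E : Type*} [MeasurableSpace E] (P0 : Measure E) [IsProbabilityMeasure P0]
    {d : ℕ} (Θ : Set (EuclideanSpace ℝ (Fin d))) (hΘ : IsCompact Θ)
    (ℓ : EuclideanSpace ℝ (Fin d) → E → ℝ)
    (hℓmeas : ∀ θ, Measurable (ℓ θ))
    (hℓint : ∀ θ ∈ Θ, Integrable (ℓ θ) P0)
    (θ0 : EuclideanSpace ℝ (Fin d)) (hθ0 : θ0 ∈ Θ)
    (hsep : ∀ ε : ℝ, 0 < ε → ∃ c : ℝ, 0 < c ∧ ∀ θ ∈ Θ, ε ≤ ‖θ - θ0‖ →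
      c ≤ (∫ z, ℓ θ z ∂P0) - ∫ z, ℓ θ0 z ∂P0)
    (γ : ℝ) (hγ : 0 < γ)
    (Q : ℕ → Ω → Measure E)
    (hQprob : ∀ m ω, IsProbabilityMeasure (Q m ω))
    (hQmeas : ∀ (m : ℕ) (B : Set E), MeasurableSet B → Measurable fun ω => Q m ω B)
    (hQint : ∀ m ω, ∀ θ ∈ Θ, Integrable (ℓ θ) (Q m ω))
    (D : ℕ → Ω → ℝ)
    (hDmeas : ∀ m, Measurable (D m))
    (hDdom : ∀ m ω, ∀ θ ∈ Θ, |(∫ z, ℓ θ z ∂(Q m ω)) - ∫ z, ℓ θ z ∂P0| ≤ D m ω)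
    (hDto0 : ∀ ε : ℝ, 0 < ε → Tendsto (fun m => μ {ω | ε < D m ω}) atTop (nhds 0))
    (θm : ℕ → Ω → EuclideanSpace ℝ (Fin d))
    (hθmmeas : ∀ m, Measurable (θm m))
    (hθmΘ : ∀ m ω, θm m ω ∈ Θ)
    (hθmmin : ∀ m ω, ∀ θ ∈ Θ,
      (∫ z, ℓ (θm m ω) z ∂P0) + γ * ∫ z, ℓ (θm m ω) z ∂(Q m ω) ≤
        (∫ z, ℓ θ z ∂P0) + γ * ∫ z, ℓ θ z ∂(Q m ω)) :
    ∀ ε : ℝ, 0 < ε →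
      Tendsto (fun m => μ {ω | ε < ‖θm m ω - θ0‖}) atTop (nhds 0) := by
  intro ε hε
  obtain ⟨c, hc, hsep'⟩ := hsep ε hε
  set δ : ℝ := (1 + γ) * c / (4 * γ) with hδdef
  have hδ : 0 < δ := by positivity
  have hsub : ∀ m, {ω | ε < ‖θm m ω - θ0‖} ⊆ {ω | δ < D m ω} := by
    intro m ω hω
    simp only [Set.mem_setOf_eq] at hω ⊢
    set a := ∫ z, ℓ (θm m ω) z ∂P0
    set b := ∫ z, ℓ θ0 z ∂P0
    set q1 := ∫ z, ℓ (θm m ω) z ∂(Q m ω)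
    set q0 := ∫ z, ℓ θ0 z ∂(Q m ω)
    have h1 : c ≤ a - b := hsep' _ (hθmΘ m ω) hω.le
    have h2 : a + γ * q1 ≤ b + γ * q0 := hθmmin m ω θ0 hθ0
    have h3 : |q0 - b| ≤ D m ω := hDdom m ω θ0 hθ0
    have h4 : |q1 - a| ≤ D m ω := hDdom m ω _ (hθmΘ m ω)
    rw [abs_le] at h3 h4
    have h5 : q0 - q1 ≤ 2 * D m ω + b - a := by linarith [h3.2, h4.1]
    have h6 : γ * (q0 - q1) ≤ γ * (2 * D m ω + b - a) :=
      mul_le_mul_of_nonneg_left h5 hγ.le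
    have h7 : (1 + γ) * c ≤ 2 * γ * D m ω := by nlinarith
    rw [hδdef, div_lt_iff₀ (by positivity)]
    nlinarith
  refine tendsto_of_tendsto_of_tendsto_of_le_of_le tendsto_const_nhds (hDto0 δ hδ)
    (fun m => zero_le) (fun m => measure_mono (hsub m))
end

section
/- Let (Ω, F, ℙ) be a probability space, E a measurable space, P0 a probability measure on E, Θ ⊆ ℝ^d compact, and ℓ : Θ × E → ℝ measurable with P0 ℓ_θ finite for every θ ∈ Θ. Suppose θ0 ∈ Θ is a well-separated minimizer of θ ↦ P0 ℓ_θ, i.e. for every ε > 0, inf{P0 ℓ_θ − P0 ℓ_{θ0} : θ ∈ Θ, ‖θ − θ0‖ ≥ ε} > 0. Fix γ > 0. For each n, let R_n and Q_n be random probability measures on E with R_n(ω) ℓ_θ and Q_n(ω) ℓ_θ finite for all θ and ω, such that sup_{θ∈Θ} |R_n ℓ_θ − P0 ℓ_θ| → 0 in probability and sup_{θ∈Θ} |Q_n ℓ_θ − P0 ℓ_θ| → 0 in probability (both suprema assumed measurable). Let θ̂_n : Ω → Θ be measurable with θ̂_n(ω) a minimizer over Θ of θ ↦ R_n(ω) ℓ_θ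 + γ Q_n(ω) ℓ_θ for every ω. Then θ̂_n converges in probability to θ0. -/
open MeasureTheory Filter

/-- second half of Proposition 1: consistency of the rectified empirical
risk minimizer.  `θ̂n n` minimizes `θ ↦ R_n ℓ_θ + γ Q_n ℓ_θ` over the compact set `Θ`,
where `θ0` is a well-separated minimizer of `θ ↦ P0 ℓ_θ`.  If both (measurable) suprema
`sup_{θ∈Θ} |R_n ℓ_θ − P0 ℓ_θ|` and `sup_{θ∈Θ} |Q_n ℓ_θ − P0 ℓ_θ|` tend to `0` in
probability, then `θ̂n → θ0` in probability.  (Each supremum is encoded by a measurable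
dominating function, which is equivalent.) -/
theorem statement2 {Ω : Type*} [MeasurableSpace Ω] (μ : Measure Ω) [IsProbabilityMeasure μ]
    {E : Type*} [MeasurableSpace E] (P0 : Measure E) [IsProbabilityMeasure P0]
    {d : ℕ} (Θ : Set (EuclideanSpace ℝ (Fin d))) (hΘ : IsCompact Θ)
    (ℓ : EuclideanSpace ℝ (Fin d) → E → ℝ)
    (hℓmeas : ∀ θ, Measurable (ℓ θ))
    (hℓint : ∀ θ ∈ Θ, Integrable (ℓ θ) P0)
    (θ0 : EuclideanSpace ℝ (Fin d)) (hθ0 : θ0 ∈ Θ)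
    (hsep : ∀ ε : ℝ, 0 < ε → ∃ c : ℝ, 0 < c ∧ ∀ θ ∈ Θ, ε ≤ ‖θ - θ0‖ →
      c ≤ (∫ z, ℓ θ z ∂P0) - ∫ z, ℓ θ0 z ∂P0)
    (γ : ℝ) (hγ : 0 < γ)
    (R Q : ℕ → Ω → Measure E)
    (hRprob : ∀ n ω, IsProbabilityMeasure (R n ω))
    (hQprob : ∀ n ω, IsProbabilityMeasure (Q n ω))
    (hRmeas : ∀ (n : ℕ) (B : Set E), MeasurableSet B → Measurable fun ω => R n ω B)
    (hQmeas : ∀ (n : ℕ) (B : Set E), MeasurableSet B → Measurable fun ω => Q n ω B)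
    (hRint : ∀ n ω, ∀ θ ∈ Θ, Integrable (ℓ θ) (R n ω))
    (hQint : ∀ n ω, ∀ θ ∈ Θ, Integrable (ℓ θ) (Q n ω))
    (DR DQ : ℕ → Ω → ℝ)
    (hDRmeas : ∀ n, Measurable (DR n))
    (hDQmeas : ∀ n, Measurable (DQ n))
    (hDRdom : ∀ n ω, ∀ θ ∈ Θ, |(∫ z, ℓ θ z ∂(R n ω)) - ∫ z, ℓ θ z ∂P0| ≤ DR n ω)
    (hDQdom : ∀ n ω, ∀ θ ∈ Θ, |(∫ z, ℓ θ z ∂(Q n ω)) - ∫ z, ℓ θ z ∂P0| ≤ DQ n ω)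
    (hDRto0 : ∀ ε : ℝ, 0 < ε → Tendsto (fun n => μ {ω | ε < DR n ω}) atTop (nhds 0))
    (hDQto0 : ∀ ε : ℝ, 0 < ε → Tendsto (fun n => μ {ω | ε < DQ n ω}) atTop (nhds 0))
    (θhat : ℕ → Ω → EuclideanSpace ℝ (Fin d))
    (hθhatmeas : ∀ n, Measurable (θhat n))
    (hθhatΘ : ∀ n ω, θhat n ω ∈ Θ)
    (hθhatmin : ∀ n ω, ∀ θ ∈ Θ,
      (∫ z, ℓ (θhat n ω) z ∂(R n ω)) + γ * ∫ z, ℓ (θhat n ω) z ∂(Q n ω) ≤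
        (∫ z, ℓ θ z ∂(R n ω)) + γ * ∫ z, ℓ θ z ∂(Q n ω)) :
    ∀ ε : ℝ, 0 < ε →
      Tendsto (fun n => μ {ω | ε < ‖θhat n ω - θ0‖}) atTop (nhds 0) := by
  intro ε hε
  obtain ⟨c, hc, hsepc⟩ := hsep ε hε
  set δR : ℝ := (1 + γ) * c / 8 with hδR
  set δQ : ℝ := (1 + γ) * c / (8 * γ) with hδQ
  have hδRpos : 0 < δR := by positivity
  have hδQpos : 0 < δQ := by positivity
  have key : ∀ n ω, ε < ‖θhat n ω - θ0‖ → δR < DR n ω ∨ δQ < DQ n ω := by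
    intro n ω hω
    by_contra hcon
    push_neg at hcon
    obtain ⟨hR1, hQ1⟩ := hcon
    have hsep' := hsepc (θhat n ω) (hθhatΘ n ω) hω.le
    have hmin := hθhatmin n ω θ0 hθ0
    have hA := abs_le.mp (hDRdom n ω (θhat n ω) (hθhatΘ n ω))
    have hB := abs_le.mp (hDQdom n ω (θhat n ω) (hθhatΘ n ω))
    have hC := abs_le.mp (hDRdom n ω θ0 hθ0)
    have hD := abs_le.mp (hDQdom n ω θ0 hθ0)
    -- multiply Q-bounds by γ
    have hB' := mul_le_mul_of_nonneg_left hB.1 hγ.le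
    have hD' := mul_le_mul_of_nonneg_left hD.2 hγ.le
    have hQ1' := mul_le_mul_of_nonneg_left hQ1 hγ.le
    have hgq : γ * δQ = (1 + γ) * c / 8 := by
      rw [hδQ]
      field_simp
    have hsep'' := mul_le_mul_of_nonneg_left hsep' (by positivity : (0:ℝ) ≤ 1 + γ)
    have hγc := mul_pos hγ hc
    linarith [hA.1, hC.2]
  have hsub : ∀ n, {ω | ε < ‖θhat n ω - θ0‖} ⊆
      {ω | δR < DR n ω} ∪ {ω | δQ < DQ n ω} := by
    intro n ω hω
    exact key n ω hω
  have hupper : ∀ n, μ {ω | ε < ‖θhat n ω - θ0‖} ≤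
      μ {ω | δR < DR n ω} + μ {ω | δQ < DQ n ω} := fun n =>
    le_trans (measure_mono (hsub n)) (measure_union_le _ _)
  have hsum : Tendsto (fun n => μ {ω | δR < DR n ω} + μ {ω | δQ < DQ n ω})
      atTop (nhds 0) := by
    have := (hDRto0 δR hδRpos).add (hDQto0 δQ hδQpos)
    simpa using this
  exact tendsto_of_tendsto_of_tendsto_of_le_of_le tendsto_const_nhds hsum
    (fun n => zero_le) hupper
end

section
/- Let (Ω, F, ℙ) be a probability space, E a measurable space, P0 a probability measure on E, and h : E → ℝ^k measurable with P0 ‖h‖² < ∞. Let Z_1, Z_2, … be i.i.d. E-valued random elements with law P0, and for each m let P_m be the empirical measure of Z_1, …, Z_m, so P_m h = (1/m) Σ_{i=1}^m h(Z_i). Let Γ : ℝ^k → ℝ^d be L-Lipschitz. For each m let Q_m be a random probability measure on E (possibly depending on Z_1, …, Z_m) such that Q_m h is measurable, and suppose g : E → ℝ^d and θ0 are such that P g_{θ0} = Γ(P h) for P = P0 and for P = Q_m(ω) for every m and ω. If ‖Q_m h − P_m h‖ = O_p(m^{-1/2}), then ‖(Q_m − P0) g_{θ0}‖ = O_p(m^{-1/2}).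 -/
open MeasureTheory Filter

lemma euclid_sq_norm {k : ℕ} (x : EuclideanSpace ℝ (Fin k)) :
    ‖x‖ ^ 2 = ∑ j : Fin k, x j ^ 2 := by
  rw [EuclideanSpace.norm_eq, Real.sq_sqrt (by positivity)]
  simp [Real.norm_eq_abs, sq_abs]

lemma emp_clt_rate {Ω : Type*} [MeasurableSpace Ω] (μ : Measure Ω) [IsProbabilityMeasure μ]
    {E : Type*} [MeasurableSpace E] (P0 : Measure E) [IsProbabilityMeasure P0]
    {k : ℕ}
    (h : E → EuclideanSpace ℝ (Fin k)) (hhmeas : Measurable h)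
    (hh2 : Integrable (fun z => ‖h z‖ ^ 2) P0)
    (Z : ℕ → Ω → E) (hZmeas : ∀ i, Measurable (Z i))
    (hZindep : ProbabilityTheory.iIndepFun Z μ)
    (hZlaw : ∀ i, Measure.map (Z i) μ = P0) :
    ∀ ε : ℝ, 0 < ε → ∃ C : ℝ, 0 < C ∧ ∀ m : ℕ,
      μ {ω | C < Real.sqrt m *
        ‖(m : ℝ)⁻¹ • ∑ i ∈ Finset.range m, h (Z i ω) - ∫ z, h z ∂P0‖} ≤
        ENNReal.ofReal ε := by
  classical
  intro ε hε
  -- coordinate functions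
  set f : Fin k → E → ℝ := fun j z => h z j with hf
  have mf : ∀ j, Measurable (f j) := fun j => (measurable_pi_apply j).comp ((WithLp.measurable_ofLp 2 _).comp hhmeas)
  have hcoord_sq : ∀ (j : Fin k) (z : E), f j z ^ 2 ≤ ‖h z‖ ^ 2 := by
    intro j z
    rw [euclid_sq_norm (h z)]
    exact Finset.single_le_sum (f := fun i => (h z i) ^ 2)
      (fun i _ => sq_nonneg _) (Finset.mem_univ j)
  have hfL2 : ∀ j, MemLp (f j) 2 P0 := by
    intro j
    refine (memLp_two_iff_integrable_sq (mf j).aestronglyMeasurable).2 ?_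
    refine hh2.mono' ((mf j).pow measurable_const).aestronglyMeasurable ?_
    filter_upwards with z
    rw [Real.norm_eq_abs, abs_of_nonneg (sq_nonneg _)]
    exact hcoord_sq j z
  have hfZL2 : ∀ (j : Fin k) (i : ℕ), MemLp (f j ∘ Z i) 2 μ := by
    intro j i
    have := hfL2 j
    rw [← hZlaw i] at this
    exact (memLp_map_measure_iff (by
      rw [hZlaw i]; exact (mf j).aestronglyMeasurable) (hZmeas i).aemeasurable).1 this
  -- means and variances
  set a : Fin k → ℝ := fun j => ∫ z, f j z ∂P0 with ha
  set v : Fin k → ℝ := fun j => ProbabilityTheory.variance (f j) P0 with hv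
  have hvnn : ∀ j, 0 ≤ v j := fun j => ProbabilityTheory.variance_nonneg _ _
  have hmean : ∀ (j : Fin k) (i : ℕ), (∫ ω, f j (Z i ω) ∂μ) = a j := by
    intro j i
    rw [ha]
    simp only
    rw [← hZlaw i, integral_map (hZmeas i).aemeasurable (by
      rw [hZlaw i]; exact (mf j).aestronglyMeasurable)]
  have hvar : ∀ (j : Fin k) (i : ℕ),
      ProbabilityTheory.variance (f j ∘ Z i) μ = v j := by
    intro j i
    rw [ProbabilityTheory.variance_eq_sub (hfZL2 j i), hv]
    simp only
    rw [ProbabilityTheory.variance_eq_sub (hfL2 j)]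
    have h1 : (∫ ω, ((f j ∘ Z i) ^ 2) ω ∂μ) = ∫ z, ((f j) ^ 2) z ∂P0 := by
      rw [← hZlaw i, integral_map (hZmeas i).aemeasurable (by
        rw [hZlaw i]
        exact ((mf j).pow measurable_const).aestronglyMeasurable)]
      rfl
    have h2 : (∫ ω, (f j ∘ Z i) ω ∂μ) = ∫ z, f j z ∂P0 := hmean j i
    rw [h1, h2]
  -- choose C
  set V : ℝ := ∑ j : Fin k, v j with hV
  have hVnn : 0 ≤ V := Finset.sum_nonneg fun j _ => hvnn j
  set C : ℝ := Real.sqrt ((k * (V + 1)) / ε) + 1 with hC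
  have hCpos : 0 < C := by positivity
  have hCsq : k * V / ε ≤ C ^ 2 := by
    have h1 : Real.sqrt ((k * (V + 1)) / ε) ^ 2 = (k * (V + 1)) / ε :=
      Real.sq_sqrt (by positivity)
    have h2 : (k : ℝ) * V / ε ≤ (k * (V + 1)) / ε :=
      (div_le_div_iff_of_pos_right hε).2 (by nlinarith [Nat.cast_nonneg (α := ℝ) k])
    nlinarith [Real.sqrt_nonneg ((k * (V + 1)) / ε)]
  refine ⟨C, hCpos, ?_⟩
  intro m
  rcases Nat.eq_zero_or_pos m with rfl | hm
  · have : {ω | C < Real.sqrt (0:ℕ) *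
        ‖((0:ℕ) : ℝ)⁻¹ • ∑ i ∈ Finset.range 0, h (Z i ω) - ∫ z, h z ∂P0‖} = ∅ := by
      ext ω
      simp only [Set.mem_setOf_eq, Set.mem_empty_iff_false, iff_false, not_lt,
        Nat.cast_zero, Real.sqrt_zero, zero_mul]
      exact hCpos.le
    rw [this, measure_empty]
    exact bot_le
  -- the sum processes
  set T : Fin k → Ω → ℝ := fun j => ∑ i ∈ Finset.range m, f j ∘ Z i with hT
  have hTL2 : ∀ j, MemLp (T j) 2 μ := fun j =>
    memLp_finset_sum' _ (fun i _ => hfZL2 j i)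
  have hTmean : ∀ j, (∫ ω, T j ω ∂μ) = m * a j := by
    intro j
    rw [hT]
    simp only [Finset.sum_apply]
    rw [integral_finset_sum _ (fun i _ => (hfZL2 j i).integrable one_le_two)]
    simp [hmean j, Finset.sum_const, nsmul_eq_mul]
  have hTvar : ∀ j, ProbabilityTheory.variance (T j) μ = m * v j := by
    intro j
    rw [hT]
    rw [ProbabilityTheory.IndepFun.variance_sum (fun i _ => hfZL2 j i)
      (fun i _ i' _ hii' => (hZindep.comp (fun _ => f j) (fun _ => mf j)).indepFun hii')]
    simp [hvar j, Finset.sum_const, nsmul_eq_mul]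
  -- Chebyshev per coordinate
  have hmpos : (0:ℝ) < m := by exact_mod_cast hm
  have hsm : Real.sqrt m ^ 2 = (m : ℝ) := Real.sq_sqrt hmpos.le
  have cheb : ∀ j : Fin k,
      μ {ω | C * Real.sqrt m / Real.sqrt k ≤ |T j ω - m * a j|} ≤
        ENNReal.ofReal (k * v j / C ^ 2) := by
    intro j
    have hk : (0:ℝ) < k := by exact_mod_cast j.pos
    have hsk : Real.sqrt k ^ 2 = (k : ℝ) := Real.sq_sqrt hk.le
    have hcpos : 0 < C * Real.sqrt m / Real.sqrt k := by
      apply div_pos (mul_pos hCpos ?_) ?_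
      · exact Real.sqrt_pos.2 hmpos
      · exact Real.sqrt_pos.2 hk
    have := ProbabilityTheory.meas_ge_le_variance_div_sq (hTL2 j) hcpos
    rw [hTmean j] at this
    refine this.trans (le_of_eq ?_)
    congr 1
    rw [hTvar j]
    rw [div_pow, mul_pow, hsm, hsk]
    field_simp
  -- event inclusion
  have hincl : {ω | C < Real.sqrt m *
        ‖(m : ℝ)⁻¹ • ∑ i ∈ Finset.range m, h (Z i ω) - ∫ z, h z ∂P0‖} ⊆
      ⋃ j : Fin k, {ω | C * Real.sqrt m / Real.sqrt k ≤ |T j ω - m * a j|} := by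
    intro ω hω
    simp only [Set.mem_setOf_eq] at hω
    set w : EuclideanSpace ℝ (Fin k) :=
      (m : ℝ)⁻¹ • ∑ i ∈ Finset.range m, h (Z i ω) - ∫ z, h z ∂P0 with hw
    by_contra hcon
    simp only [Set.mem_iUnion, Set.mem_setOf_eq, not_exists, not_le] at hcon
    -- coordinates of w
    have hwj : ∀ j : Fin k, T j ω - m * a j = m * w j := by
      intro j
      have hsum : (∑ i ∈ Finset.range m, h (Z i ω)) j
          = ∑ i ∈ Finset.range m, f j (Z i ω) := by
        induction' (Finset.range m) using Finset.induction_on with i s his ih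
        · simp
        · rw [Finset.sum_insert his, Finset.sum_insert his, ← ih]
          rfl
      have hhL2 : MemLp h 2 P0 :=
        (memLp_two_iff_integrable_sq_norm hhmeas.aestronglyMeasurable).2 hh2
      have haj : (∫ z, h z ∂P0) j = a j := by
        have := (EuclideanSpace.proj (𝕜 := ℝ) j).integral_comp_comm
          (hhL2.integrable one_le_two)
        simpa using this.symm
      have hwjj : w j = (m : ℝ)⁻¹ * (∑ i ∈ Finset.range m, f j (Z i ω)) - a j := by
        rw [hw]
        show ((m : ℝ)⁻¹ • ∑ i ∈ Finset.range m, h (Z i ω)) j - (∫ z, h z ∂P0) j = _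
        rw [haj, ← hsum]
        rfl
      have hTj : T j ω = ∑ i ∈ Finset.range m, f j (Z i ω) := by
        rw [hT]; simp
      rw [hTj, hwjj]
      field_simp
    -- derive the contradiction
    have hbound : ∀ j : Fin k, (m : ℝ) * w j ^ 2 ≤ C ^ 2 / k := by
      intro j
      have hk : (0:ℝ) < k := by exact_mod_cast j.pos
      have hsk : Real.sqrt k ^ 2 = (k : ℝ) := Real.sq_sqrt hk.le
      have h1 := hcon j
      rw [hwj j] at h1
      have h2 : |(m:ℝ) * w j| ^ 2 ≤ (C * Real.sqrt m / Real.sqrt k) ^ 2 := by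
        have habs : 0 ≤ |(m:ℝ) * w j| := abs_nonneg _
        nlinarith
      have e1 : |(m:ℝ) * w j| ^ 2 = (m:ℝ) ^ 2 * w j ^ 2 := by rw [sq_abs, mul_pow]
      have e2 : (C * Real.sqrt m / Real.sqrt k) ^ 2 = C ^ 2 * m / k := by
        rw [div_pow, mul_pow, hsm, hsk]
      rw [e1, e2] at h2
      have h3 : (m:ℝ) ^ 2 * w j ^ 2 * k ≤ C ^ 2 * m := (le_div_iff₀ hk).1 h2
      rw [le_div_iff₀ hk]
      nlinarith
    have hsumle : ∑ j : Fin k, (m : ℝ) * w j ^ 2 ≤ C ^ 2 := by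
      calc ∑ j : Fin k, (m : ℝ) * w j ^ 2 ≤ ∑ _j : Fin k, C ^ 2 / k :=
            Finset.sum_le_sum fun j _ => hbound j
        _ = k * (C ^ 2 / k) := by simp [Finset.sum_const, nsmul_eq_mul]
        _ ≤ C ^ 2 := by
            rcases eq_or_ne (k : ℝ) 0 with hk | hk
            · rw [hk, zero_mul]; positivity
            · rw [mul_div_cancel₀ _ hk]
    have hnormsq : (Real.sqrt m * ‖w‖) ^ 2 = ∑ j : Fin k, (m : ℝ) * w j ^ 2 := by
      rw [mul_pow, hsm, euclid_sq_norm w, Finset.mul_sum]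
    have hwnn : 0 ≤ Real.sqrt m * ‖w‖ := by positivity
    have hfin : Real.sqrt m * ‖w‖ ≤ C :=
      (pow_le_pow_iff_left₀ hwnn hCpos.le two_ne_zero).1
        (by rw [hnormsq]; exact hsumle)
    exact absurd hω (not_lt.2 hfin)
  calc μ _ ≤ μ (⋃ j : Fin k, {ω | C * Real.sqrt m / Real.sqrt k ≤ |T j ω - m * a j|}) :=
        measure_mono hincl
    _ ≤ ∑ j : Fin k, μ {ω | C * Real.sqrt m / Real.sqrt k ≤ |T j ω - m * a j|} :=
        measure_iUnion_fintype_le _ _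
    _ ≤ ∑ j : Fin k, ENNReal.ofReal (k * v j / C ^ 2) := Finset.sum_le_sum fun j _ => cheb j
    _ = ENNReal.ofReal (∑ j : Fin k, k * v j / C ^ 2) :=
        (ENNReal.ofReal_sum_of_nonneg (fun j _ => div_nonneg (mul_nonneg (Nat.cast_nonneg k) (hvnn j)) (sq_nonneg C))).symm
    _ ≤ ENNReal.ofReal ε := by
        apply ENNReal.ofReal_le_ofReal
        have : ∑ j : Fin k, (k:ℝ) * v j / C ^ 2 = k * V / C ^ 2 := by
          rw [hV, Finset.mul_sum, Finset.sum_div]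
        rw [this, div_le_iff₀ (pow_pos hCpos 2)]
        calc (k:ℝ) * V = (k * V / ε) * ε := by field_simp
          _ ≤ C ^ 2 * ε := by
              apply mul_le_mul_of_nonneg_right hCsq hε.le
          _ = ε * C ^ 2 := by ring

/-- globally Lipschitz case of Proposition 4.1, moment matching:
if `P0 ‖h‖² < ∞`, `Z₁, Z₂, …` are i.i.d. with law `P0` with empirical averages
`P_m h = m⁻¹ ∑_{i<m} h(Z_i)`, `Γ` is `L`-Lipschitz, the score moment factors through the
moment of `h` (`P g = Γ(P h)` for `P = P0` and `P = Q_m(ω)`), and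
`‖Q_m h − P_m h‖ = O_p(m^{-1/2})`, then `‖(Q_m − P0) g‖ = O_p(m^{-1/2})`. -/
theorem statement6 {Ω : Type*} [MeasurableSpace Ω] (μ : Measure Ω) [IsProbabilityMeasure μ]
    {E : Type*} [MeasurableSpace E] (P0 : Measure E) [IsProbabilityMeasure P0]
    {k d : ℕ}
    (h : E → EuclideanSpace ℝ (Fin k)) (hhmeas : Measurable h)
    (hh2 : Integrable (fun z => ‖h z‖ ^ 2) P0)
    (Z : ℕ → Ω → E) (hZmeas : ∀ i, Measurable (Z i))
    (hZindep : ProbabilityTheory.iIndepFun Z μ)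
    (hZlaw : ∀ i, Measure.map (Z i) μ = P0)
    (L : NNReal) (Γ : EuclideanSpace ℝ (Fin k) → EuclideanSpace ℝ (Fin d))
    (hΓ : LipschitzWith L Γ)
    (Q : ℕ → Ω → Measure E)
    (hQprob : ∀ m ω, IsProbabilityMeasure (Q m ω))
    (hQmeas : ∀ (m : ℕ) (B : Set E), MeasurableSet B → Measurable fun ω => Q m ω B)
    (hQhmeas : ∀ m : ℕ, Measurable fun ω => ∫ z, h z ∂(Q m ω))
    (hQhint : ∀ m ω, Integrable h (Q m ω))
    (g : E → EuclideanSpace ℝ (Fin d)) (hgmeas : Measurable g)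
    (hgint : Integrable g P0)
    (hgintQ : ∀ m ω, Integrable g (Q m ω))
    (hfact0 : (∫ z, g z ∂P0) = Γ (∫ z, h z ∂P0))
    (hfactQ : ∀ m ω, (∫ z, g z ∂(Q m ω)) = Γ (∫ z, h z ∂(Q m ω)))
    (hOp : ∀ ε : ℝ, 0 < ε → ∃ C : ℝ, 0 < C ∧ ∃ M : ℕ, ∀ m ≥ M,
      μ {ω | C < Real.sqrt m *
        ‖(∫ z, h z ∂(Q m ω)) - (m : ℝ)⁻¹ • ∑ i ∈ Finset.range m, h (Z i ω)‖} ≤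
        ENNReal.ofReal ε) :
    ∀ ε : ℝ, 0 < ε → ∃ C : ℝ, 0 < C ∧ ∃ M : ℕ, ∀ m ≥ M,
      μ {ω | C < Real.sqrt m * ‖(∫ z, g z ∂(Q m ω)) - ∫ z, g z ∂P0‖} ≤
        ENNReal.ofReal ε := by
  intro ε hε
  obtain ⟨C1, hC1pos, M1, hM1⟩ := hOp (ε / 2) (by linarith)
  obtain ⟨C2, hC2pos, hM2⟩ :=
    emp_clt_rate μ P0 h hhmeas hh2 Z hZmeas hZindep hZlaw (ε / 2) (by linarith)
  refine ⟨((L : ℝ) + 1) * (C1 + C2), by positivity, M1, fun m hm => ?_⟩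
  set C : ℝ := ((L : ℝ) + 1) * (C1 + C2) with hCdef
  have hincl : {ω | C < Real.sqrt m * ‖(∫ z, g z ∂(Q m ω)) - ∫ z, g z ∂P0‖} ⊆
      {ω | C1 < Real.sqrt m *
        ‖(∫ z, h z ∂(Q m ω)) - (m : ℝ)⁻¹ • ∑ i ∈ Finset.range m, h (Z i ω)‖} ∪
      {ω | C2 < Real.sqrt m *
        ‖(m : ℝ)⁻¹ • ∑ i ∈ Finset.range m, h (Z i ω) - ∫ z, h z ∂P0‖} := by
    intro ω hω
    simp only [Set.mem_setOf_eq] at hω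
    by_contra hcon
    simp only [Set.mem_union, Set.mem_setOf_eq, not_or, not_lt] at hcon
    obtain ⟨h1, h2⟩ := hcon
    set S : EuclideanSpace ℝ (Fin k) :=
      (m : ℝ)⁻¹ • ∑ i ∈ Finset.range m, h (Z i ω) with hS
    have hlip : ‖(∫ z, g z ∂(Q m ω)) - ∫ z, g z ∂P0‖ ≤
        (L : ℝ) * ‖(∫ z, h z ∂(Q m ω)) - ∫ z, h z ∂P0‖ := by
      rw [hfactQ m ω, hfact0, ← dist_eq_norm, ← dist_eq_norm]
      exact hΓ.dist_le_mul _ _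
    have htri : ‖(∫ z, h z ∂(Q m ω)) - ∫ z, h z ∂P0‖ ≤
        ‖(∫ z, h z ∂(Q m ω)) - S‖ + ‖S - ∫ z, h z ∂P0‖ :=
      norm_sub_le_norm_sub_add_norm_sub _ _ _
    have hsm : 0 ≤ Real.sqrt m := Real.sqrt_nonneg _
    have hLnn : (0:ℝ) ≤ (L : ℝ) := L.coe_nonneg
    have : Real.sqrt m * ‖(∫ z, g z ∂(Q m ω)) - ∫ z, g z ∂P0‖ ≤
        (L : ℝ) * (Real.sqrt m * ‖(∫ z, h z ∂(Q m ω)) - S‖ +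
          Real.sqrt m * ‖S - ∫ z, h z ∂P0‖) := by
      calc Real.sqrt m * ‖(∫ z, g z ∂(Q m ω)) - ∫ z, g z ∂P0‖
          ≤ Real.sqrt m * ((L : ℝ) * ‖(∫ z, h z ∂(Q m ω)) - ∫ z, h z ∂P0‖) :=
            mul_le_mul_of_nonneg_left hlip hsm
        _ ≤ Real.sqrt m * ((L : ℝ) *
            (‖(∫ z, h z ∂(Q m ω)) - S‖ + ‖S - ∫ z, h z ∂P0‖)) := by
            apply mul_le_mul_of_nonneg_left _ hsm
            exact mul_le_mul_of_nonneg_left htri hLnn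
        _ = (L : ℝ) * (Real.sqrt m * ‖(∫ z, h z ∂(Q m ω)) - S‖ +
            Real.sqrt m * ‖S - ∫ z, h z ∂P0‖) := by ring
    nlinarith
  calc μ _ ≤ μ ({ω | C1 < Real.sqrt m *
        ‖(∫ z, h z ∂(Q m ω)) - (m : ℝ)⁻¹ • ∑ i ∈ Finset.range m, h (Z i ω)‖} ∪
      {ω | C2 < Real.sqrt m *
        ‖(m : ℝ)⁻¹ • ∑ i ∈ Finset.range m, h (Z i ω) - ∫ z, h z ∂P0‖}) :=
        measure_mono hincl
    _ ≤ _ + _ := measure_union_le _ _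
    _ ≤ ENNReal.ofReal (ε / 2) + ENNReal.ofReal (ε / 2) :=
        add_le_add (hM1 m hm) (hM2 m)
    _ = ENNReal.ofReal ε := by
        rw [← ENNReal.ofReal_add (by linarith) (by linarith)]
        norm_num
end

section
/- Let (Ω, F, ℙ) be a probability space, E a measurable space, P0 a probability measure on E, and h : E → ℝ^k measurable with P0 ‖h‖² < ∞. Let Z_1, Z_2, … be i.i.d. E-valued random elements with law P0, and for each m let P_m be the empirical measure of Z_1, …, Z_m. Let Γ : ℝ^k → ℝ^d be L-Lipschitz on some open neighborhood U of P0 h. For each m let Q_m be a random probability measure on E (possibly depending on Z_1, …, Z_m) such that Q_m h is measurable, and suppose g : E → ℝ^d and θ0 are such that P g_{θ0} = Γ(P h) for P = P0 and for P = Q_m(ω) for every m and ω. If Q_m h − P0 h → 0 in probability and ‖Q_m h − P_m h‖ = O_p(m^{-1/2}), then ‖(Q_m − P0) g_{θ0}‖ = O_p(m^{-1/2}). -/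
open MeasureTheory Filter
open ProbabilityTheory


variable {k : ℕ}

lemma euclid_norm_sq (v : EuclideanSpace ℝ (Fin k)) : ‖v‖ ^ 2 = ∑ j, (v j) ^ 2 := by
  rw [EuclideanSpace.norm_eq, Real.sq_sqrt (by positivity)]
  simp [Real.norm_eq_abs, sq_abs]

lemma euclid_abs_coord_le (v : EuclideanSpace ℝ (Fin k)) (j : Fin k) : |v j| ≤ ‖v‖ := by
  have h1 : (v j) ^ 2 ≤ ‖v‖ ^ 2 := by
    rw [euclid_norm_sq]
    exact Finset.single_le_sum (f := fun j => (v j) ^ 2) (fun i _ => sq_nonneg _)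
      (Finset.mem_univ j)
  calc |v j| = Real.sqrt ((v j) ^ 2) := (Real.sqrt_sq_eq_abs _).symm
    _ ≤ Real.sqrt (‖v‖ ^ 2) := Real.sqrt_le_sqrt h1
    _ = ‖v‖ := Real.sqrt_sq (norm_nonneg _)

lemma emp_bound {Ω E : Type*} [MeasurableSpace Ω] (μ : Measure Ω) [IsProbabilityMeasure μ]
    [MeasurableSpace E] (P0 : Measure E) [IsProbabilityMeasure P0] {k : ℕ}
    (h : E → EuclideanSpace ℝ (Fin k)) (hhmeas : Measurable h)
    (hh2 : Integrable (fun z => ‖h z‖ ^ 2) P0)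
    (Z : ℕ → Ω → E) (hZmeas : ∀ i, Measurable (Z i))
    (hZindep : ProbabilityTheory.iIndepFun Z μ)
    (hZlaw : ∀ i, Measure.map (Z i) μ = P0) :
    ∀ ε : ℝ, 0 < ε → ∃ C : ℝ, 0 < C ∧ ∀ m : ℕ, 1 ≤ m →
      μ {ω | C < Real.sqrt m *
          ‖((m : ℝ)⁻¹ • ∑ i ∈ Finset.range m, h (Z i ω)) - ∫ z, h z ∂P0‖} ≤
        ENNReal.ofReal ε := by
  intro ε hε
  set a : EuclideanSpace ℝ (Fin k) := ∫ z, h z ∂P0 with ha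
  -- integrability of h
  have hhint : Integrable h P0 := by
    refine Integrable.mono' ((integrable_const (1:ℝ)).add hh2) hhmeas.aestronglyMeasurable ?_
    filter_upwards with z
    simp only [Pi.add_apply]
    nlinarith [norm_nonneg (h z), sq_nonneg (‖h z‖ - 1)]
  have hcoordmeas : ∀ j : Fin k, Measurable (fun v : EuclideanSpace ℝ (Fin k) => v j) :=
    fun j => (EuclideanSpace.proj j).continuous.measurable
  have haj : ∀ j : Fin k, a j = ∫ z, h z j ∂P0 := fun j =>
    ((EuclideanSpace.proj j).integral_comp_comm hhint).symm
  -- coordinate processes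
  set Xc : ℕ → Fin k → Ω → ℝ := fun i j ω => h (Z i ω) j with hXc
  have hXcmeas : ∀ i j, Measurable (Xc i j) := fun i j =>
    (hcoordmeas j).comp (hhmeas.comp (hZmeas i))
  have hsqP0 : ∀ j : Fin k, Integrable (fun z => (h z j) ^ 2) P0 := by
    intro j
    refine Integrable.mono' hh2 (((hcoordmeas j).comp hhmeas).pow_const 2).aestronglyMeasurable ?_
    filter_upwards with z
    have := euclid_abs_coord_le (h z) j
    calc ‖(h z j) ^ 2‖ = |h z j| ^ 2 := by
          rw [Real.norm_eq_abs, abs_of_nonneg (sq_nonneg _), sq_abs]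
      _ ≤ ‖h z‖ ^ 2 := by apply pow_le_pow_left₀ (abs_nonneg _) this
  have hXcLp : ∀ i j, MemLp (Xc i j) 2 μ := by
    intro i j
    rw [memLp_two_iff_integrable_sq (hXcmeas i j).aestronglyMeasurable]
    have h1 := hsqP0 j
    rw [← hZlaw i] at h1
    exact (integrable_map_measure
      (((hcoordmeas j).comp hhmeas).pow_const 2).aestronglyMeasurable
      (hZmeas i).aemeasurable).1 h1
  have hEX : ∀ i j, (∫ ω, Xc i j ω ∂μ) = a j := by
    intro i j
    rw [haj j, ← hZlaw i,
      integral_map (hZmeas i).aemeasurable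
        (show Measurable fun z => h z j from
          (hcoordmeas j).comp hhmeas).aestronglyMeasurable]
  have hVarP0 : ∀ j, Integrable (fun z => (h z j - a j) ^ 2) P0 := by
    intro j
    have hm : MemLp (fun z => h z j) 2 P0 :=
      (memLp_two_iff_integrable_sq
        ((hcoordmeas j).comp hhmeas).aestronglyMeasurable).2 (hsqP0 j)
    exact (hm.sub (memLp_const (a j))).integrable_sq
  have hVar : ∀ i j, variance (Xc i j) μ = ∫ z, (h z j - a j) ^ 2 ∂P0 := by
    intro i j
    rw [variance_eq_integral (hXcmeas i j).aemeasurable, hEX i j]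
    rw [← hZlaw i, integral_map (hZmeas i).aemeasurable
      (show Measurable fun z => (h z j - a j) ^ 2 from
        (((hcoordmeas j).comp hhmeas).sub measurable_const).pow_const
        2).aestronglyMeasurable]
  -- V
  set V : ℝ := ∫ z, ‖h z - a‖ ^ 2 ∂P0 with hV
  have hVnonneg : 0 ≤ V := integral_nonneg fun z => sq_nonneg _
  have hVsum : V = ∑ j, ∫ z, (h z j - a j) ^ 2 ∂P0 := by
    rw [hV, ← integral_finset_sum _ (fun j _ => hVarP0 j)]
    congr 1
    ext z
    rw [euclid_norm_sq]
    rfl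
  -- key second moment identity
  have key : ∀ m : ℕ, 1 ≤ m →
      Integrable (fun ω => ‖((m : ℝ)⁻¹ • ∑ i ∈ Finset.range m, h (Z i ω)) - a‖ ^ 2) μ ∧
      (∫ ω, ‖((m : ℝ)⁻¹ • ∑ i ∈ Finset.range m, h (Z i ω)) - a‖ ^ 2 ∂μ) = V / m := by
    intro m hm
    have hm0 : (m : ℝ) ≠ 0 := Nat.cast_ne_zero.2 (by omega)
    have hpt : ∀ ω, ‖((m : ℝ)⁻¹ • ∑ i ∈ Finset.range m, h (Z i ω)) - a‖ ^ 2 =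
        ∑ j, ((m : ℝ)⁻¹)^2 * ((∑ i ∈ Finset.range m, Xc i j ω) - m * a j) ^ 2 := by
      intro ω
      rw [euclid_norm_sq]
      refine Finset.sum_congr rfl fun j _ => ?_
      have h2 : (∑ i ∈ Finset.range m, h (Z i ω)) j =
          ∑ i ∈ Finset.range m, Xc i j ω := by rw [WithLp.ofLp_sum, Finset.sum_apply]
      have h1 : (((m : ℝ)⁻¹ • ∑ i ∈ Finset.range m, h (Z i ω)) - a) j =
          (m : ℝ)⁻¹ * (∑ i ∈ Finset.range m, Xc i j ω) - a j := by
        rw [← h2]; rfl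
      rw [h1]
      field_simp
      try ring
    -- MemLp of the sum
    have hSLp : ∀ j, MemLp (∑ i ∈ Finset.range m, Xc i j) 2 μ :=
      fun j => memLp_finset_sum' _ (fun i _ => hXcLp i j)
    have hES : ∀ j, (∫ ω, (∑ i ∈ Finset.range m, Xc i j) ω ∂μ) = m * a j := by
      intro j
      simp only [Finset.sum_apply]
      rw [integral_finset_sum _ (fun i _ => (hXcLp i j).integrable one_le_two)]
      simp [hEX]
    have hVarS : ∀ j, (∫ ω, ((∑ i ∈ Finset.range m, Xc i j ω) - m * a j) ^ 2 ∂μ) =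
        m * ∫ z, (h z j - a j) ^ 2 ∂P0 := by
      intro j
      have h1 : (∫ ω, ((∑ i ∈ Finset.range m, Xc i j ω) - m * a j) ^ 2 ∂μ) =
          variance (∑ i ∈ Finset.range m, Xc i j) μ := by
        rw [variance_eq_integral (hSLp j).aestronglyMeasurable.aemeasurable, hES j]
        refine integral_congr_ae (Filter.Eventually.of_forall fun ω => ?_)
        simp [Pi.pow_apply, Pi.sub_apply, Finset.sum_apply]
      rw [h1, IndepFun.variance_sum (fun i _ => hXcLp i j)
        (fun i _ i' _ hne => (hZindep.indepFun hne).comp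
          ((hcoordmeas j).comp hhmeas) ((hcoordmeas j).comp hhmeas))]
      simp [hVar, Finset.sum_const]
    have hintsq : ∀ j, Integrable
        (fun ω => ((∑ i ∈ Finset.range m, Xc i j ω) - m * a j) ^ 2) μ := by
      intro j
      have := ((hSLp j).sub (memLp_const ((m:ℝ) * a j))).integrable_sq
      convert this using 1
      ext ω
      simp [Pi.pow_apply, Pi.sub_apply, Finset.sum_apply]
    constructor
    · refine (integrable_finset_sum (Finset.univ : Finset (Fin k))
        (f := fun j ω => ((m : ℝ)⁻¹)^2 *
          ((∑ i ∈ Finset.range m, Xc i j ω) - m * a j) ^ 2)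
        (fun j _ => ((hintsq j).const_mul (((m : ℝ)⁻¹)^2)))).congr ?_
      exact Filter.Eventually.of_forall fun ω => (hpt ω).symm
    calc (∫ ω, ‖((m : ℝ)⁻¹ • ∑ i ∈ Finset.range m, h (Z i ω)) - a‖ ^ 2 ∂μ)
        = ∫ ω, ∑ j, ((m : ℝ)⁻¹)^2 *
            ((∑ i ∈ Finset.range m, Xc i j ω) - m * a j) ^ 2 ∂μ := by
          exact integral_congr_ae (Filter.Eventually.of_forall hpt)
      _ = ∑ j, ∫ ω, ((m : ℝ)⁻¹)^2 *
            ((∑ i ∈ Finset.range m, Xc i j ω) - m * a j) ^ 2 ∂μ := by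
          exact integral_finset_sum _ (fun j _ => ((hintsq j).const_mul _))
      _ = ∑ j, ((m : ℝ)⁻¹)^2 * (m * ∫ z, (h z j - a j) ^ 2 ∂P0) := by
          refine Finset.sum_congr rfl fun j _ => ?_
          rw [integral_const_mul, hVarS j]
      _ = V / m := by
          rw [← Finset.mul_sum, ← Finset.mul_sum, ← hVsum]
          field_simp
  -- choose C
  refine ⟨Real.sqrt ((V + 1) / ε), Real.sqrt_pos.2 (by positivity), ?_⟩
  set C := Real.sqrt ((V + 1) / ε) with hC
  have hCpos : 0 < C := Real.sqrt_pos.2 (by positivity)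
  have hCsq : C ^ 2 = (V + 1) / ε := Real.sq_sqrt (by positivity)
  intro m hm
  have hm0 : (0:ℝ) < m := by exact_mod_cast Nat.lt_of_lt_of_le Nat.zero_lt_one hm
  set f : Ω → ℝ := fun ω =>
    ‖((m : ℝ)⁻¹ • ∑ i ∈ Finset.range m, h (Z i ω)) - a‖ ^ 2 with hf
  have hfint : Integrable f μ := (key m hm).1
  have hfI : (∫ ω, f ω ∂μ) = V / m := (key m hm).2
  -- Markov
  have hmarkov := mul_meas_ge_le_integral_of_nonneg
    (μ := μ) (f := f) (Filter.Eventually.of_forall fun ω => sq_nonneg _) hfint (C^2 / m)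
  rw [hfI] at hmarkov
  have hsub : {ω | C < Real.sqrt m *
      ‖((m : ℝ)⁻¹ • ∑ i ∈ Finset.range m, h (Z i ω)) - a‖} ⊆
      {ω | C^2 / m ≤ f ω} := by
    intro ω hω
    simp only [Set.mem_setOf_eq] at hω ⊢
    have h1 : C ^ 2 < (Real.sqrt m *
        ‖((m : ℝ)⁻¹ • ∑ i ∈ Finset.range m, h (Z i ω)) - a‖) ^ 2 :=
      pow_lt_pow_left₀ hω hCpos.le two_ne_zero
    rw [mul_pow, Real.sq_sqrt hm0.le] at h1
    rw [div_le_iff₀ hm0]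
    rw [hf]
    nlinarith
  have hμtop : μ {ω | C^2 / m ≤ f ω} ≠ ⊤ := measure_ne_top _ _
  have h2 : (μ {ω | C^2 / m ≤ f ω}).toReal ≤ ε := by
    have hpos : 0 < C^2 / m := by positivity
    have h3 : (μ {ω | C^2 / m ≤ f ω}).toReal ≤ (V/m) / (C^2/m) := by
      rw [le_div_iff₀ hpos]
      rw [measureReal_def] at hmarkov
      linarith [hmarkov]
    refine h3.trans ?_
    have h4 : V / (m:ℝ) / (C^2 / m) = V * ε / (V+1) := by
      rw [hCsq]; field_simp
    rw [h4, div_le_iff₀ (by positivity)]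
    nlinarith
  calc μ _ ≤ μ {ω | C^2 / m ≤ f ω} := measure_mono hsub
    _ ≤ ENNReal.ofReal ε := by
        rw [← ENNReal.ofReal_toReal hμtop]
        exact ENNReal.ofReal_le_ofReal h2


/-- locally Lipschitz case of Proposition 4.1, moment matching:
if `P0 ‖h‖² < ∞`, `Z₁, Z₂, …` are i.i.d. with law `P0` with empirical averages
`P_m h = m⁻¹ ∑_{i<m} h(Z_i)`, `Γ` is `L`-Lipschitz on an open neighborhood `U` of `P0 h`, the score moment factors through the
moment of `h` (`P g = Γ(P h)` for `P = P0` and `P = Q_m(ω)`), and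
`Q_m h − P0 h → 0` in probability and `‖Q_m h − P_m h‖ = O_p(m^{-1/2})`, then `‖(Q_m − P0) g‖ = O_p(m^{-1/2})`. -/
theorem statement7 {Ω : Type*} [MeasurableSpace Ω] (μ : Measure Ω) [IsProbabilityMeasure μ]
    {E : Type*} [MeasurableSpace E] (P0 : Measure E) [IsProbabilityMeasure P0]
    {k d : ℕ}
    (h : E → EuclideanSpace ℝ (Fin k)) (hhmeas : Measurable h)
    (hh2 : Integrable (fun z => ‖h z‖ ^ 2) P0)
    (Z : ℕ → Ω → E) (hZmeas : ∀ i, Measurable (Z i))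
    (hZindep : ProbabilityTheory.iIndepFun Z μ)
    (hZlaw : ∀ i, Measure.map (Z i) μ = P0)
    (L : NNReal) (Γ : EuclideanSpace ℝ (Fin k) → EuclideanSpace ℝ (Fin d))
    (U : Set (EuclideanSpace ℝ (Fin k))) (hUopen : IsOpen U)
    (hUmem : (∫ z, h z ∂P0) ∈ U)
    (hΓ : LipschitzOnWith L Γ U)
    (Q : ℕ → Ω → Measure E)
    (hQprob : ∀ m ω, IsProbabilityMeasure (Q m ω))
    (hQmeas : ∀ (m : ℕ) (B : Set E), MeasurableSet B → Measurable fun ω => Q m ω B)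
    (hQhmeas : ∀ m : ℕ, Measurable fun ω => ∫ z, h z ∂(Q m ω))
    (hQhint : ∀ m ω, Integrable h (Q m ω))
    (g : E → EuclideanSpace ℝ (Fin d)) (hgmeas : Measurable g)
    (hgint : Integrable g P0)
    (hgintQ : ∀ m ω, Integrable g (Q m ω))
    (hfact0 : (∫ z, g z ∂P0) = Γ (∫ z, h z ∂P0))
    (hfactQ : ∀ m ω, (∫ z, g z ∂(Q m ω)) = Γ (∫ z, h z ∂(Q m ω)))
    (hQhcons : ∀ ε : ℝ, 0 < ε → Tendsto
      (fun m => μ {ω | ε < ‖(∫ z, h z ∂(Q m ω)) - ∫ z, h z ∂P0‖}) atTop (nhds 0))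
    (hOp : ∀ ε : ℝ, 0 < ε → ∃ C : ℝ, 0 < C ∧ ∃ M : ℕ, ∀ m ≥ M,
      μ {ω | C < Real.sqrt m *
        ‖(∫ z, h z ∂(Q m ω)) - (m : ℝ)⁻¹ • ∑ i ∈ Finset.range m, h (Z i ω)‖} ≤
        ENNReal.ofReal ε) :
    ∀ ε : ℝ, 0 < ε → ∃ C : ℝ, 0 < C ∧ ∃ M : ℕ, ∀ m ≥ M,
      μ {ω | C < Real.sqrt m * ‖(∫ z, g z ∂(Q m ω)) - ∫ z, g z ∂P0‖} ≤
        ENNReal.ofReal ε := by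
  intro ε hε
  have hε3 : (0:ℝ) < ε / 3 := by linarith
  set a : EuclideanSpace ℝ (Fin k) := ∫ z, h z ∂P0 with ha
  obtain ⟨r, hr, hball⟩ := Metric.isOpen_iff.1 hUopen a hUmem
  set δ : ℝ := r / 2 with hδdef
  have hδ : 0 < δ := by positivity
  -- consistency event
  have h1 := (hQhcons δ hδ).eventually_lt_const
    (show (0:ENNReal) < ENNReal.ofReal (ε/3) from ENNReal.ofReal_pos.2 hε3)
  obtain ⟨M1, hM1⟩ := eventually_atTop.1 h1
  -- O_p event
  obtain ⟨C1, hC1, M2, hM2⟩ := hOp (ε/3) hε3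
  -- empirical event
  obtain ⟨C2, hC2, hM3⟩ := emp_bound μ P0 h hhmeas hh2 Z hZmeas hZindep hZlaw (ε/3) hε3
  refine ⟨(L : ℝ) * (C1 + C2) + 1, by positivity, max (max M1 M2) 1, fun m hm => ?_⟩
  set C : ℝ := (L : ℝ) * (C1 + C2) + 1 with hCdef
  have hmM1 : M1 ≤ m := le_trans (le_max_left _ _) (le_trans (le_max_left _ _) hm)
  have hmM2 : M2 ≤ m := le_trans (le_max_right _ _) (le_trans (le_max_left _ _) hm)
  have hm1 : 1 ≤ m := le_trans (le_max_right _ _) hm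
  set A : Set Ω := {ω | δ < ‖(∫ z, h z ∂(Q m ω)) - a‖} with hA
  set B : Set Ω := {ω | C1 < Real.sqrt m *
      ‖(∫ z, h z ∂(Q m ω)) - (m : ℝ)⁻¹ • ∑ i ∈ Finset.range m, h (Z i ω)‖} with hB
  set D : Set Ω := {ω | C2 < Real.sqrt m *
      ‖((m : ℝ)⁻¹ • ∑ i ∈ Finset.range m, h (Z i ω)) - a‖} with hD
  have hsub : {ω | C < Real.sqrt m * ‖(∫ z, g z ∂(Q m ω)) - ∫ z, g z ∂P0‖} ⊆
      A ∪ (B ∪ D) := by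
    intro ω hω
    simp only [Set.mem_setOf_eq] at hω
    by_contra hno
    simp only [Set.mem_union, hA, hB, hD, Set.mem_setOf_eq, not_or, not_lt] at hno
    obtain ⟨hnA, hnB, hnD⟩ := hno
    set Qh : EuclideanSpace ℝ (Fin k) := ∫ z, h z ∂(Q m ω) with hQh
    set Ph : EuclideanSpace ℝ (Fin k) :=
      (m : ℝ)⁻¹ • ∑ i ∈ Finset.range m, h (Z i ω) with hPh
    have hQU : Qh ∈ U := hball (by
      rw [Metric.mem_ball, dist_eq_norm]
      calc ‖Qh - a‖ ≤ δ := hnA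
        _ < r := by rw [hδdef]; linarith)
    have hlip : ‖(∫ z, g z ∂(Q m ω)) - ∫ z, g z ∂P0‖ ≤ (L:ℝ) * ‖Qh - a‖ := by
      rw [hfactQ m ω, hfact0, ← dist_eq_norm, ← dist_eq_norm]
      exact hΓ.dist_le_mul _ hQU _ hUmem
    have hs : (0:ℝ) ≤ Real.sqrt m := Real.sqrt_nonneg _
    have htri : ‖Qh - a‖ ≤ ‖Qh - Ph‖ + ‖Ph - a‖ := by
      have := dist_triangle Qh Ph a
      simpa [dist_eq_norm] using this
    have hmain : Real.sqrt m * ‖(∫ z, g z ∂(Q m ω)) - ∫ z, g z ∂P0‖ ≤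
        (L:ℝ) * (C1 + C2) := by
      calc Real.sqrt m * ‖(∫ z, g z ∂(Q m ω)) - ∫ z, g z ∂P0‖
          ≤ Real.sqrt m * ((L:ℝ) * ‖Qh - a‖) := mul_le_mul_of_nonneg_left hlip hs
        _ = (L:ℝ) * (Real.sqrt m * ‖Qh - a‖) := by ring
        _ ≤ (L:ℝ) * (Real.sqrt m * (‖Qh - Ph‖ + ‖Ph - a‖)) := by
            apply mul_le_mul_of_nonneg_left _ L.coe_nonneg
            exact mul_le_mul_of_nonneg_left htri hs
        _ = (L:ℝ) * (Real.sqrt m * ‖Qh - Ph‖ + Real.sqrt m * ‖Ph - a‖) := by ring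
        _ ≤ (L:ℝ) * (C1 + C2) := by
            apply mul_le_mul_of_nonneg_left _ L.coe_nonneg
            exact add_le_add hnB hnD
    rw [hCdef] at hω
    linarith
  calc μ {ω | C < Real.sqrt m * ‖(∫ z, g z ∂(Q m ω)) - ∫ z, g z ∂P0‖}
      ≤ μ (A ∪ (B ∪ D)) := measure_mono hsub
    _ ≤ μ A + μ (B ∪ D) := measure_union_le _ _
    _ ≤ μ A + (μ B + μ D) := add_le_add le_rfl (measure_union_le _ _)
    _ ≤ ENNReal.ofReal (ε/3) + (ENNReal.ofReal (ε/3) + ENNReal.ofReal (ε/3)) := by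
        refine add_le_add ((hM1 m hmM1).le) (add_le_add (hM2 m hmM2) (hM3 m hm1))
    _ = ENNReal.ofReal ε := by
        rw [← ENNReal.ofReal_add hε3.le hε3.le, ← ENNReal.ofReal_add hε3.le (by linarith)]
        congr 1; ring
end
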